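/- For any partitions λ and μ, the Littlewood–Richardson coefficient c_{λμ}^{λ+μ} is at least 1, where λ+μ is the partition whose i-th part is λ_i + μ_i. -/

import Mathlib

open scoped Classical

/-- The cells of the skew shape `nu / lam`. -/
def skewCells (lam nu : YoungDiagram) : Finset (ℕ × ℕ) := nu.cells \ lam.cells

/-- `d` is read before (or at) `c` in the reverse reading word: rows are read from
top to bottom, and each row from right to left. -/
def readsBefore (d c : ℕ × ℕ) : Prop := d.1 < c.1 ∨ (d.1 = c.1 ∧ c.2 ≤ d.2)

/-- `T` is a Littlewood–Richardson skew tableau of shape `nu / lam` and content `mu`: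
entries are positive exactly on the cells of `nu / lam`, rows weakly increase,
columns strictly increase, the number of entries equal to `k + 1` is the `k`-th part
of `mu`, and every prefix of the reverse reading word contains at least as many
entries `k + 1` as entries `k + 2` (the lattice word condition). -/
def IsLRFilling (lam mu nu : YoungDiagram) (T : ℕ × ℕ → ℕ) : Prop :=
  (∀ c : ℕ × ℕ, c ∈ skewCells lam nu ↔ T c ≠ 0) ∧
  (∀ i j : ℕ, (i, j) ∈ skewCells lam nu → (i, j + 1) ∈ skewCells lam nu →
      T (i, j) ≤ T (i, j + 1)) ∧
  (∀ i j : ℕ, (i, j) ∈ skewCells lam nu → (i + 1, j) ∈ skewCells lam nu →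
      T (i, j) < T (i + 1, j)) ∧
  (∀ k : ℕ, ((skewCells lam nu).filter fun c => T c = k + 1).card = mu.rowLen k) ∧
  (∀ c ∈ skewCells lam nu, ∀ k : ℕ,
      ((skewCells lam nu).filter fun d => readsBefore d c ∧ T d = k + 2).card ≤
      ((skewCells lam nu).filter fun d => readsBefore d c ∧ T d = k + 1).card)

/-- The Littlewood–Richardson coefficient `c_{lam,mu}^{nu}`, defined by the
Littlewood–Richardson rule as the number of Littlewood–Richardson skew tableaux of
shape `nu / lam` and content `mu`. -/
noncomputable def lrCoeff (lam mu nu : YoungDiagram) : ℕ :=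
  if lam ≤ nu then Nat.card { T : ℕ × ℕ → ℕ // IsLRFilling lam mu nu T } else 0

/-!
Fill row `i` of the skew shape `(lam + mu) / lam` entirely with `i + 1`. Rows are then constant
and columns strictly increase, row `i` carries exactly `mu_i` entries, and since every entry
`k + 1` is read before any entry `k + 2`, the lattice condition reduces to `mu_(k+1) ≤ mu_k`.
-/

lemma YoungDiagram.le_of_rowLen_le {lam nu : YoungDiagram}
    (h : ∀ i, lam.rowLen i ≤ nu.rowLen i) : lam ≤ nu := by
  rintro ⟨i, j⟩ hc
  exact YoungDiagram.mem_iff_lt_rowLen.2 ((YoungDiagram.mem_iff_lt_rowLen.1 hc).trans_le (h i))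

lemma mem_skewCells {lam nu : YoungDiagram} {i j : ℕ} :
    (i, j) ∈ skewCells lam nu ↔ lam.rowLen i ≤ j ∧ j < nu.rowLen i := by
  simp [skewCells, YoungDiagram.mem_cells, YoungDiagram.mem_iff_lt_rowLen, not_lt, and_comm]

section LRFilling

variable {lam mu nu : YoungDiagram} {T : ℕ × ℕ → ℕ}

lemma IsLRFilling.eq_zero_of_notMem (hT : IsLRFilling lam mu nu T) {c : ℕ × ℕ}
    (hc : c ∉ skewCells lam nu) : T c = 0 :=
  not_not.1 (mt (hT.1 c).2 hc)

lemma IsLRFilling.le_colLen (hT : IsLRFilling lam mu nu T) (c : ℕ × ℕ) :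
    T c ≤ mu.colLen 0 := by
  by_cases h0 : T c = 0
  · omega
  have hc : c ∈ skewCells lam nu := (hT.1 c).2 h0
  have hrow : 0 < mu.rowLen (T c - 1) := by
    rw [← hT.2.2.2.1]
    exact Finset.card_pos.2 ⟨c, Finset.mem_filter.2 ⟨hc, by omega⟩⟩
  have : T c - 1 < mu.colLen 0 := by
    rwa [← YoungDiagram.mem_iff_lt_colLen, YoungDiagram.mem_iff_lt_rowLen]
  omega

lemma finite_lrFillings (lam mu nu : YoungDiagram) :
    Finite { T : ℕ × ℕ → ℕ // IsLRFilling lam mu nu T } := by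
  refine Finite.of_injective (fun T (c : skewCells lam nu) =>
    (⟨T.1 c, Nat.lt_succ_of_le (T.2.le_colLen c)⟩ : Fin (mu.colLen 0 + 1))) ?_
  rintro ⟨T, hT⟩ ⟨T', hT'⟩ h
  ext c
  by_cases hc : c ∈ skewCells lam nu
  · exact congrArg Fin.val (congrFun h ⟨c, hc⟩)
  · exact (hT.eq_zero_of_notMem hc).trans (hT'.eq_zero_of_notMem hc).symm

end LRFilling

section RowFilling

variable {lam nu : YoungDiagram}

def rowFilling (lam nu : YoungDiagram) (c : ℕ × ℕ) : ℕ :=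
  if c ∈ skewCells lam nu then c.1 + 1 else 0

lemma rowFilling_of_mem {c : ℕ × ℕ} (hc : c ∈ skewCells lam nu) :
    rowFilling lam nu c = c.1 + 1 :=
  if_pos hc

lemma rowFilling_ne_zero_iff {c : ℕ × ℕ} :
    rowFilling lam nu c ≠ 0 ↔ c ∈ skewCells lam nu := by
  unfold rowFilling
  split_ifs with hc <;> simp [hc]

lemma rowFilling_eq_succ_iff {c : ℕ × ℕ} {k : ℕ} :
    rowFilling lam nu c = k + 1 ↔ c ∈ skewCells lam nu ∧ c.1 = k := by
  unfold rowFilling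
  split_ifs with hc <;> simp [hc]

lemma card_filter_rowFilling_eq_succ (k : ℕ) :
    ((skewCells lam nu).filter fun c => rowFilling lam nu c = k + 1).card =
      nu.rowLen k - lam.rowLen k := by
  have : ((skewCells lam nu).filter fun c => rowFilling lam nu c = k + 1) =
      {k} ×ˢ Finset.Ico (lam.rowLen k) (nu.rowLen k) := by
    ext ⟨i, j⟩
    simp only [Finset.mem_filter, rowFilling_eq_succ_iff, Finset.mem_product,
      Finset.mem_singleton, Finset.mem_Ico, mem_skewCells]
    grind
  rw [this, Finset.card_product, Finset.card_singleton, one_mul, Nat.card_Ico]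

lemma card_filter_readsBefore_rowFilling_le (c : ℕ × ℕ) (k : ℕ)
    (hanti : nu.rowLen (k + 1) - lam.rowLen (k + 1) ≤ nu.rowLen k - lam.rowLen k) :
    ((skewCells lam nu).filter fun d => readsBefore d c ∧ rowFilling lam nu d = k + 2).card ≤
      ((skewCells lam nu).filter fun d => readsBefore d c ∧ rowFilling lam nu d = k + 1).card := by
  by_cases hck : c.1 ≤ k
  · have hempty : ((skewCells lam nu).filter
        fun d => readsBefore d c ∧ rowFilling lam nu d = k + 2) = ∅ := by
      refine Finset.filter_eq_empty_iff.2 fun d _ ⟨hdc, hd⟩ => ?_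
      rw [rowFilling_eq_succ_iff] at hd
      unfold readsBefore at hdc
      omega
    rw [hempty, Finset.card_empty]
    exact Nat.zero_le _
  · have hprefix : ((skewCells lam nu).filter
        fun d => readsBefore d c ∧ rowFilling lam nu d = k + 1) =
        (skewCells lam nu).filter fun d => rowFilling lam nu d = k + 1 := by
      refine Finset.filter_congr fun d _ => and_iff_right_of_imp fun hd => ?_
      rw [rowFilling_eq_succ_iff] at hd
      exact Or.inl (by omega)
    calc _ ≤ ((skewCells lam nu).filter fun d => rowFilling lam nu d = k + 1 + 1).card :=
          Finset.card_le_card (Finset.monotone_filter_right _ fun _ _ => And.right)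
      _ ≤ _ := by
        rwa [hprefix, card_filter_rowFilling_eq_succ, card_filter_rowFilling_eq_succ]

lemma isLRFilling_rowFilling {mu : YoungDiagram}
    (hmu : ∀ k, mu.rowLen k = nu.rowLen k - lam.rowLen k) :
    IsLRFilling lam mu nu (rowFilling lam nu) := by
  refine ⟨fun c => rowFilling_ne_zero_iff.symm, ?rows, ?cols, ?content, ?lattice⟩
  case rows =>
    intro i j h h'
    rw [rowFilling_of_mem h, rowFilling_of_mem h']
  case cols =>
    intro i j h h'
    rw [rowFilling_of_mem h, rowFilling_of_mem h']
    omega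
  case content =>
    intro k
    rw [card_filter_rowFilling_eq_succ, hmu]
  case lattice =>
    intro c _ k
    apply card_filter_readsBefore_rowFilling_le
    rw [← hmu, ← hmu]
    exact mu.rowLen_anti k (k + 1) k.le_succ

end RowFilling

/-- For any partitions `lam` and `mu`, the Littlewood–Richardson coefficient
`c_{lam,mu}^{lam + mu}` is at least `1`, where `lam + mu` is the partition whose
`i`-th part is `lam_i + mu_i`. -/
theorem one_le_lrCoeff_self_add (lam mu nu : YoungDiagram)
    (hnu : ∀ i : ℕ, nu.rowLen i = lam.rowLen i + mu.rowLen i) :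
    1 ≤ lrCoeff lam mu nu := by
  have hle : lam ≤ nu := YoungDiagram.le_of_rowLen_le fun i => by rw [hnu]; omega
  have hLR : IsLRFilling lam mu nu (rowFilling lam nu) :=
    isLRFilling_rowFilling fun k => by rw [hnu]; omega
  have := finite_lrFillings lam mu nu
  have : Nonempty { T : ℕ × ℕ → ℕ // IsLRFilling lam mu nu T } := ⟨⟨_, hLR⟩⟩
  rw [lrCoeff, if_pos hle]
  exact Nat.card_pos
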